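/- arXiv:math/9503228 — 3 statements merged into one kernel-verified Lean document; each statement's English description precedes it below -/
import Mathlib

section
/- Let H : ℝ^{2n} → ℝ be smooth and compactly supported with max H = m, and suppose H has no non-constant closed trajectory in time less than 1. Define K : ℝ^{2n}×ℝ² → ℝ by K(x,z) = m + π|z|² − H(x). Then the Hamiltonian flow of K on ℝ^{2n+2} with its standard symplectic form has no non-constant closed trajectory in time less than 1: every solution γ of γ'(t) = X_K(γ(t)) with γ(T) = γ(0) for some 0 < T < 1 is constant. -/
open Set

noncomputable section

/-- `ℝ^{2n}`, written as pairs consisting of the `n` x-coordinates and the `n` y-coordinates. -/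
abbrev Esp (n : ℕ) : Type := (Fin n → ℝ) × (Fin n → ℝ)

/-- The standard symplectic form `ω₀ = Σ dxᵢ ∧ dyᵢ` on `ℝ^{2n}`. -/
def omega0 {n : ℕ} (v w : Esp n) : ℝ := ∑ i, (v.1 i * w.2 i - v.2 i * w.1 i)

/-- The Hamiltonian vector field `X_H = J ∇H`, i.e. `X_H = (-∂H/∂y, ∂H/∂x)`. -/
def hamVF {n : ℕ} (H : Esp n → ℝ) (p : Esp n) : Esp n :=
  (fun i => - (fderiv ℝ H p) (0, Pi.single i 1),
   fun i => (fderiv ℝ H p) (Pi.single i 1, 0))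

/-- Total variation `sup H - inf H`. -/
def totVar {n : ℕ} (F : Esp n → ℝ) : ℝ := sSup (Set.range F) - sInf (Set.range F)

/-- Hofer length `L(H) = ∫₀¹ (sup_x H_t - inf_x H_t) dt`. -/
def hoferLength {n : ℕ} (H : ℝ → Esp n → ℝ) : ℝ := ∫ t in (0:ℝ)..1, totVar (H t)

/-- Support of a time-dependent Hamiltonian lies in a fixed compact set. -/
def IsCompactlySupported {n : ℕ} (H : ℝ → Esp n → ℝ) : Prop :=
  ∃ C : Set (Esp n), IsCompact C ∧ ∀ t x, x ∉ C → H t x = 0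

/-- `φ` is the Hamiltonian isotopy generated by `H`. -/
def IsHamIsotopyOf {n : ℕ} (H : ℝ → Esp n → ℝ) (φ : ℝ → Esp n → Esp n) : Prop :=
  (∀ x, φ 0 x = x) ∧ ∀ x t, HasDerivAt (fun s => φ s x) (hamVF (H t) (φ t x)) t

/-- The projection `ℝ^{2n+2} = ℝ^{2n} × ℝ² → ℝ^{2n}` (the last pair of coordinates is
the `ℝ²`-factor `z`). -/
def projE {n : ℕ} (p : Esp (n+1)) : Esp n :=
  (fun i => p.1 i.castSucc, fun i => p.2 i.castSucc)

def pCLM (n : ℕ) : Esp (n+1) →L[ℝ] Esp n :=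
  (ContinuousLinearMap.pi (fun i : Fin n =>
    (ContinuousLinearMap.proj (R := ℝ) (φ := fun _ : Fin (n+1) => ℝ) i.castSucc).comp
      (ContinuousLinearMap.fst ℝ (Fin (n+1) → ℝ) (Fin (n+1) → ℝ)))).prod
  (ContinuousLinearMap.pi (fun i : Fin n =>
    (ContinuousLinearMap.proj (R := ℝ) (φ := fun _ : Fin (n+1) => ℝ) i.castSucc).comp
      (ContinuousLinearMap.snd ℝ (Fin (n+1) → ℝ) (Fin (n+1) → ℝ))))

lemma pCLM_eq (n : ℕ) : ⇑(pCLM n) = (projE (n := n)) := rfl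

def eX (n : ℕ) : Esp (n+1) →L[ℝ] ℝ :=
  (ContinuousLinearMap.proj (R := ℝ) (φ := fun _ : Fin (n+1) => ℝ) (Fin.last n)).comp
    (ContinuousLinearMap.fst ℝ (Fin (n+1) → ℝ) (Fin (n+1) → ℝ))

def eY (n : ℕ) : Esp (n+1) →L[ℝ] ℝ :=
  (ContinuousLinearMap.proj (R := ℝ) (φ := fun _ : Fin (n+1) => ℝ) (Fin.last n)).comp
    (ContinuousLinearMap.snd ℝ (Fin (n+1) → ℝ) (Fin (n+1) → ℝ))

lemma eX_apply {n : ℕ} (p : Esp (n+1)) : eX n p = p.1 (Fin.last n) := rfl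
lemma eY_apply {n : ℕ} (p : Esp (n+1)) : eY n p = p.2 (Fin.last n) := rfl

lemma hasFDerivAtK {n : ℕ} (H : Esp n → ℝ) (hH : Differentiable ℝ H) (m : ℝ) (p : Esp (n+1)) :
    HasFDerivAt (fun p : Esp (n+1) =>
        m + Real.pi * ((p.1 (Fin.last n))^2 + (p.2 (Fin.last n))^2) - H (projE p))
      (((2 * Real.pi * (eX n p)) • (eX n) + (2 * Real.pi * (eY n p)) • (eY n))
        - (fderiv ℝ H (projE p)).comp (pCLM n)) p := by
  have h1 : HasFDerivAt (fun q : Esp (n+1) => H (projE q))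
      ((fderiv ℝ H (projE p)).comp (pCLM n)) p :=
    (hH.differentiableAt.hasFDerivAt).comp p ((pCLM n).hasFDerivAt)
  have h2 : HasFDerivAt (fun q : Esp (n+1) =>
      m + Real.pi * ((q.1 (Fin.last n))^2 + (q.2 (Fin.last n))^2))
      ((2 * Real.pi * (eX n p)) • (eX n) + (2 * Real.pi * (eY n p)) • (eY n)) p := by
    have h := ((((eX n).hasFDerivAt (x := p)).mul ((eX n).hasFDerivAt (x := p))).add
      (((eY n).hasFDerivAt (x := p)).mul ((eY n).hasFDerivAt (x := p))))
    have h2 := (h.const_mul Real.pi).const_add m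
    simp only [pow_two]
    refine h2.congr_fderiv ?_
    ext v <;>
    · simp [eX, eY, ContinuousLinearMap.comp_apply, smul_eq_mul]
      ring
  exact h2.sub h1

variable {n : ℕ}

/-- Abbreviation for the big Hamiltonian. -/
def Kf (H : Esp n → ℝ) (m : ℝ) : Esp (n+1) → ℝ := fun p =>
  m + Real.pi * ((p.1 (Fin.last n))^2 + (p.2 (Fin.last n))^2) - H (projE p)

lemma fderivK_apply (H : Esp n → ℝ) (hH : Differentiable ℝ H) (m : ℝ)
    (p v : Esp (n+1)) :
    fderiv ℝ (Kf H m) p v =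
      2 * Real.pi * p.1 (Fin.last n) * v.1 (Fin.last n)
        + 2 * Real.pi * p.2 (Fin.last n) * v.2 (Fin.last n)
        - fderiv ℝ H (projE p) (projE v) := by
  unfold Kf
  rw [(hasFDerivAtK H hH m p).fderiv]
  simp [eX, eY, smul_eq_mul, ← pCLM_eq n]

lemma single_castSucc (j j' : Fin n) :
    (Pi.single (Fin.castSucc j) (1:ℝ) : Fin (n+1) → ℝ) (Fin.castSucc j') =
      (Pi.single j (1:ℝ) : Fin n → ℝ) j' := by
  rcases eq_or_ne j j' with rfl | h
  · simp
  · rw [Pi.single_eq_of_ne (by simpa [Fin.castSucc_inj] using h.symm),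
      Pi.single_eq_of_ne h.symm]

lemma single_castSucc_last (j : Fin n) :
    (Pi.single (Fin.castSucc j) (1:ℝ) : Fin (n+1) → ℝ) (Fin.last n) = 0 :=
  Pi.single_eq_of_ne (Fin.castSucc_lt_last j).ne' _

lemma single_last_castSucc (j : Fin n) :
    (Pi.single (Fin.last n) (1:ℝ) : Fin (n+1) → ℝ) (Fin.castSucc j) = 0 :=
  Pi.single_eq_of_ne (Fin.castSucc_lt_last j).ne _

lemma hamK_proj (H : Esp n → ℝ) (hH : Differentiable ℝ H) (m : ℝ) (p : Esp (n+1)) :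
    projE (hamVF (Kf H m) p) = - hamVF H (projE p) := by
  have e1 : ∀ j : Fin n, projE ((0, Pi.single (Fin.castSucc j) (1:ℝ)) : Esp (n+1))
      = ((0, Pi.single j 1) : Esp n) := by
    intro j
    refine Prod.ext (funext fun j' => rfl) (funext fun j' => ?_)
    exact single_castSucc j j'
  have e2 : ∀ j : Fin n, projE ((Pi.single (Fin.castSucc j) (1:ℝ), 0) : Esp (n+1))
      = ((Pi.single j 1, 0) : Esp n) := by
    intro j
    refine Prod.ext (funext fun j' => single_castSucc j j') (funext fun j' => rfl)
  refine Prod.ext (funext fun j => ?_) (funext fun j => ?_)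
  · show (hamVF (Kf H m) p).1 (Fin.castSucc j) = _
    show -(fderiv ℝ (Kf H m) p) (0, Pi.single (Fin.castSucc j) 1) = _
    rw [fderivK_apply H hH m, e1 j]
    simp [hamVF, single_castSucc_last j]
  · show (hamVF (Kf H m) p).2 (Fin.castSucc j) = _
    show (fderiv ℝ (Kf H m) p) (Pi.single (Fin.castSucc j) 1, 0) = _
    rw [fderivK_apply H hH m, e2 j]
    simp [hamVF, single_castSucc_last j]

lemma hamK_lastX (H : Esp n → ℝ) (hH : Differentiable ℝ H) (m : ℝ) (p : Esp (n+1)) :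
    (hamVF (Kf H m) p).1 (Fin.last n) = -(2 * Real.pi * p.2 (Fin.last n)) := by
  have e0 : projE ((0, Pi.single (Fin.last n) (1:ℝ)) : Esp (n+1)) = (0 : Esp n) := by
    refine Prod.ext (funext fun j' => rfl) (funext fun j' => single_last_castSucc j')
  show -(fderiv ℝ (Kf H m) p) (0, Pi.single (Fin.last n) 1) = _
  rw [fderivK_apply H hH m, e0]
  simp

lemma hamK_lastY (H : Esp n → ℝ) (hH : Differentiable ℝ H) (m : ℝ) (p : Esp (n+1)) :
    (hamVF (Kf H m) p).2 (Fin.last n) = 2 * Real.pi * p.1 (Fin.last n) := by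
  have e0 : projE ((Pi.single (Fin.last n) (1:ℝ), 0) : Esp (n+1)) = (0 : Esp n) := by
    refine Prod.ext (funext fun j' => single_last_castSucc j') (funext fun j' => rfl)
  show (fderiv ℝ (Kf H m) p) (Pi.single (Fin.last n) 1, 0) = _
  rw [fderivK_apply H hH m, e0]
  simp

/-- If the compactly supported Hamiltonian `H` on `ℝ^{2n}`, with
`max H = m`, has no non-constant closed trajectory in time less than `1`, then neither
does `K(x,z) = m + π|z|² - H(x)` on `ℝ^{2n+2}`. -/
theorem statement7 {n : ℕ} (H : Esp n → ℝ)
    (hHsm : ContDiff ℝ (⊤ : ℕ∞) H) (hHsupp : HasCompactSupport H)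
    (m : ℝ) (hmax : IsGreatest (Set.range H) m)
    (hno : ∀ γ : ℝ → Esp n, (∀ t, HasDerivAt γ (hamVF H (γ t)) t) →
      ∀ T, 0 < T → T < 1 → γ T = γ 0 → ∀ t, γ t = γ 0) :
    ∀ γ : ℝ → Esp (n+1),
      (∀ t, HasDerivAt γ
        (hamVF (fun p : Esp (n+1) =>
          m + Real.pi * ((p.1 (Fin.last n))^2 + (p.2 (Fin.last n))^2) - H (projE p))
          (γ t)) t) →
      ∀ T, 0 < T → T < 1 → γ T = γ 0 → ∀ t, γ t = γ 0 := by
  intro γ hγ T hT0 hT1 hTc t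
  have hH : Differentiable ℝ H := hHsm.differentiable (by simp)
  have hγ' : ∀ t, HasDerivAt γ (hamVF (Kf H m) (γ t)) t := hγ
  set π := Real.pi with hπ
  -- the projected curve
  set x : ℝ → Esp n := fun s => projE (γ s) with hxdef
  have hx : ∀ s, HasDerivAt x (-(hamVF H (x s))) s := by
    intro s
    have h := ((pCLM n).hasFDerivAt).comp_hasDerivAt s (hγ' s)
    simp only [pCLM_eq] at h
    rw [hamK_proj H hH m] at h
    exact h
  -- time-reversed projected curve is an `H`-trajectory
  set δ : ℝ → Esp n := fun u => x (T - u) with hδdef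
  have hδ : ∀ u, HasDerivAt δ (hamVF H (δ u)) u := by
    intro u
    have hinner : HasDerivAt (fun u : ℝ => T - u) (-1) u := by
      simpa using (hasDerivAt_id u).const_sub T
    have h := (hx (T - u)).scomp u hinner
    refine h.congr_deriv ?_
    simp [hδdef]
  have hxTc : x T = x 0 := by simp only [hxdef, hTc]
  have hδc : δ T = δ 0 := by simp [hδdef, hxTc]
  have hδconst := hno δ hδ T hT0 hT1 hδc
  have hxconst : ∀ s, x s = x 0 := by
    intro s
    have h1 := hδconst (T - s)
    simp only [hδdef] at h1
    rw [show T - (T - s) = s by ring, show T - 0 = T by ring] at h1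
    rw [h1, hxTc]
  -- the last coordinates
  set a : ℝ → ℝ := fun s => (γ s).1 (Fin.last n) with hadef
  set b : ℝ → ℝ := fun s => (γ s).2 (Fin.last n) with hbdef
  have ha : ∀ s, HasDerivAt a (-(2 * π * b s)) s := by
    intro s
    have h := ((eX n).hasFDerivAt).comp_hasDerivAt s (hγ' s)
    have he : eX n (hamVF (Kf H m) (γ s)) = -(2 * π * b s) := hamK_lastX H hH m (γ s)
    rw [he] at h
    exact h
  have hb : ∀ s, HasDerivAt b (2 * π * a s) s := by
    intro s
    have h := ((eY n).hasFDerivAt).comp_hasDerivAt s (hγ' s)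
    have he : eY n (hamVF (Kf H m) (γ s)) = 2 * π * a s := hamK_lastY H hH m (γ s)
    rw [he] at h
    exact h
  have hccos : ∀ s : ℝ, HasDerivAt (fun u : ℝ => Real.cos (2*π*u))
      (-(Real.sin (2*π*s)) * (2*π)) s := by
    intro s
    exact (Real.hasDerivAt_cos (2*π*s)).comp s (by simpa using (hasDerivAt_id s).const_mul (2*π))
  have hcsin : ∀ s : ℝ, HasDerivAt (fun u : ℝ => Real.sin (2*π*u))
      (Real.cos (2*π*s) * (2*π)) s := by
    intro s
    exact (Real.hasDerivAt_sin (2*π*s)).comp s (by simpa using (hasDerivAt_id s).const_mul (2*π))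
  set f : ℝ → ℝ := fun s => a s * Real.cos (2*π*s) + b s * Real.sin (2*π*s) with hfdef
  set g : ℝ → ℝ := fun s => -(a s * Real.sin (2*π*s)) + b s * Real.cos (2*π*s) with hgdef
  have hf : ∀ s, HasDerivAt f 0 s := by
    intro s
    have h := ((ha s).mul (hccos s)).add ((hb s).mul (hcsin s))
    rw [show (0:ℝ) = -(2 * π * b s) * Real.cos (2*π*s)
        + a s * (-(Real.sin (2*π*s)) * (2*π))
        + (2 * π * a s * Real.sin (2*π*s) + b s * (Real.cos (2*π*s) * (2*π))) by ring]
    exact h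
  have hg : ∀ s, HasDerivAt g 0 s := by
    intro s
    have h := (((ha s).mul (hcsin s)).neg).add ((hb s).mul (hccos s))
    rw [show (0:ℝ) = -(-(2 * π * b s) * Real.sin (2*π*s)
        + a s * (Real.cos (2*π*s) * (2*π)))
        + (2 * π * a s * Real.cos (2*π*s) + b s * (-(Real.sin (2*π*s)) * (2*π))) by ring]
    exact h
  have hfc : ∀ u : ℝ, f u = f 0 := fun u =>
    is_const_of_deriv_eq_zero (fun s => (hf s).differentiableAt) (fun s => (hf s).deriv) u 0
  have hgc : ∀ u : ℝ, g u = g 0 := fun u =>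
    is_const_of_deriv_eq_zero (fun s => (hg s).differentiableAt) (fun s => (hg s).deriv) u 0
  have hf0 : f 0 = a 0 := by simp [hfdef]
  have hg0 : g 0 = b 0 := by simp [hgdef]
  have haT : a T = a 0 := by simp only [hadef, hTc]
  have hbT : b T = b 0 := by simp only [hbdef, hTc]
  have hpyth := Real.sin_sq_add_cos_sq (2*π*T)
  have hcne : Real.cos (2*π*T) ≠ 1 := by
    intro hce
    have hpos : (0:ℝ) < π := Real.pi_pos
    have h0 : 2*π*T = 0 :=
      (Real.cos_eq_one_iff_of_lt_of_lt (by nlinarith) (by nlinarith)).mp hce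
    nlinarith
  have e1 : a 0 * Real.cos (2*π*T) + b 0 * Real.sin (2*π*T) = a 0 := by
    have h := hfc T
    rw [hf0] at h
    simp only [hfdef] at h
    rw [haT, hbT] at h
    exact h
  have e2 : -(a 0 * Real.sin (2*π*T)) + b 0 * Real.cos (2*π*T) = b 0 := by
    have h := hgc T
    rw [hg0] at h
    simp only [hgdef] at h
    rw [haT, hbT] at h
    exact h
  have h2c : (2:ℝ) - 2 * Real.cos (2*π*T) ≠ 0 := fun h => hcne (by linarith)
  have ha0 : a 0 = 0 := by
    have key : a 0 * (2 - 2 * Real.cos (2*π*T)) = 0 := by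
      linear_combination (Real.cos (2*π*T) - 1) * e1 - Real.sin (2*π*T) * e2 - (a 0) * hpyth
    exact (mul_eq_zero.mp key).resolve_right h2c
  have hb0 : b 0 = 0 := by
    have key : b 0 * (2 - 2 * Real.cos (2*π*T)) = 0 := by
      linear_combination Real.sin (2*π*T) * e1 + (Real.cos (2*π*T) - 1) * e2 - (b 0) * hpyth
    exact (mul_eq_zero.mp key).resolve_right h2c
  have hpy2 := Real.sin_sq_add_cos_sq (2*π*t)
  have hft : a t * Real.cos (2*π*t) + b t * Real.sin (2*π*t) = 0 := by
    have h := hfc t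
    rw [hf0, ha0] at h
    simpa only [hfdef] using h
  have hgt : -(a t * Real.sin (2*π*t)) + b t * Real.cos (2*π*t) = 0 := by
    have h := hgc t
    rw [hg0, hb0] at h
    simpa only [hgdef] using h
  have hat : a t = 0 := by
    linear_combination Real.cos (2*π*t) * hft - Real.sin (2*π*t) * hgt - (a t) * hpy2
  have hbt : b t = 0 := by
    linear_combination Real.sin (2*π*t) * hft + Real.cos (2*π*t) * hgt - (b t) * hpy2
  refine Prod.ext (funext fun i => ?_) (funext fun i => ?_)
  · induction i using Fin.lastCases with
    | last => show a t = a 0; rw [hat, ha0]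
    | cast j => exact congrFun (congrArg Prod.fst (hxconst t)) j
  · induction i using Fin.lastCases with
    | last => show b t = b 0; rw [hbt, hb0]
    | cast j => exact congrFun (congrArg Prod.snd (hxconst t)) j
end
end

section
/- The group of compactly supported Hamiltonian diffeomorphisms of ℝ^{2n} has no short loops; concretely: let K : [0,1]×ℝ^{2n} → ℝ be a smooth time-dependent Hamiltonian with support in a fixed compact set whose generated isotopy ψ_t is a loop (ψ_1 = id). Then for every ε > 0 there is a smooth family K^s, s ∈ [0,1], of time-dependent Hamiltonians (jointly smooth in (s,t,x), with supports contained in a fixed compact set) such that K^0 = K, the isotopy generated by each K^s is a loop (its time-1 map is the identity), and L(K^1) < ε. -/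
open Set

noncomputable section

namespace S8

variable {n : ℕ}

lemma hasFDerivAt_slice {E G : Type*} [NormedAddCommGroup E] [NormedSpace ℝ E]
    [NormedAddCommGroup G] [NormedSpace ℝ G]
    {F : ℝ × E → G} (hF : ContDiff ℝ (⊤ : ℕ∞) F) (t : ℝ) (p : E) :
    HasFDerivAt (fun x : E => F (t, x))
      ((fderiv ℝ F (t, p)).comp (ContinuousLinearMap.inr ℝ ℝ E)) p :=
  ((hF.differentiable (by simp) (t, p)).hasFDerivAt).comp p (hasFDerivAt_prodMk_right t p)

lemma hamVF_eq {K : ℝ → Esp n → ℝ} (hK : ContDiff ℝ (⊤ : ℕ∞) fun q : ℝ × Esp n => K q.1 q.2)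
    (t : ℝ) (p : Esp n) :
    hamVF (K t) p =
      ((fun i => -(fderiv ℝ (fun q : ℝ × Esp n => K q.1 q.2) (t, p))
          (0, ((0 : Fin n → ℝ), Pi.single i 1))),
       (fun i => (fderiv ℝ (fun q : ℝ × Esp n => K q.1 q.2) (t, p))
          (0, (Pi.single i 1, (0 : Fin n → ℝ))))) := by
  have h := (hasFDerivAt_slice hK t p).fderiv
  unfold hamVF
  rw [h]
  rfl

lemma exists_unif_lipschitz {K : ℝ → Esp n → ℝ}
    (hK : ContDiff ℝ (⊤ : ℕ∞) fun q : ℝ × Esp n => K q.1 q.2)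
    {C : Set (Esp n)} (hC : IsCompact C) (hsupp : ∀ t x, x ∉ C → K t x = 0) :
    ∃ M : NNReal, ∀ t ∈ Icc (0:ℝ) 1, LipschitzWith M (hamVF (K t)) := by
  set F : ℝ × Esp n → ℝ := fun q => K q.1 q.2 with hF
  set G : ℝ × Esp n → Esp n := fun q =>
    ((fun i => -(fderiv ℝ F q) (0, ((0 : Fin n → ℝ), Pi.single i 1))),
     (fun i => (fderiv ℝ F q) (0, (Pi.single i 1, (0 : Fin n → ℝ))))) with hG
  have hGeq : ∀ t p, hamVF (K t) p = G (t, p) := fun t p => hamVF_eq hK t p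
  have hDF : ContDiff ℝ (⊤ : ℕ∞) (fderiv ℝ F) := hK.fderiv_right (by simp)
  have hGsm : ContDiff ℝ (⊤ : ℕ∞) G := by
    refine ContDiff.prodMk ?_ ?_
    · exact contDiff_pi.mpr fun i => (hDF.clm_apply contDiff_const).neg
    · exact contDiff_pi.mpr fun i => hDF.clm_apply contDiff_const
  have hDGc : Continuous (fderiv ℝ G) := (hGsm.fderiv_right (m := (⊤ : ℕ∞)) (by simp)).continuous
  obtain ⟨b, hb⟩ := ((isCompact_Icc (a := (0:ℝ)) (b := 1)).prod hC).exists_bound_of_continuousOn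
    hDGc.continuousOn
  have hU : IsOpen {q : ℝ × Esp n | q.2 ∉ C} :=
    (hC.isClosed.isOpen_compl).preimage continuous_snd
  have hFz : ∀ q : ℝ × Esp n, q.2 ∉ C → fderiv ℝ F q = 0 := by
    intro q hq
    have hev : F =ᶠ[nhds q] fun _ => (0 : ℝ) := by
      filter_upwards [hU.mem_nhds hq] with r hr
      exact hsupp r.1 r.2 hr
    rw [hev.fderiv_eq, fderiv_fun_const]
    rfl
  have hGz : ∀ q : ℝ × Esp n, q.2 ∉ C → G q = 0 := by
    intro q hq
    simp [hG, hFz q hq, Prod.ext_iff]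
    rfl
  have hDGz : ∀ q : ℝ × Esp n, q.2 ∉ C → fderiv ℝ G q = 0 := by
    intro q hq
    have hev : G =ᶠ[nhds q] fun _ => (0 : Esp n) := by
      filter_upwards [hU.mem_nhds hq] with r hr
      exact hGz r hr
    rw [hev.fderiv_eq, fderiv_fun_const]
    rfl
  refine ⟨Real.toNNReal (max b 0), ?_⟩
  intro t ht
  have hslice : ∀ p : Esp n, HasFDerivAt (fun x : Esp n => G (t, x))
      ((fderiv ℝ G (t, p)).comp (ContinuousLinearMap.inr ℝ ℝ (Esp n))) p :=
    fun p => hasFDerivAt_slice hGsm t p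
  have hbound : ∀ p : Esp n, ‖fderiv ℝ (fun x : Esp n => G (t, x)) p‖ ≤ max b 0 := by
    intro p
    rw [(hslice p).fderiv]
    have hinr : ‖ContinuousLinearMap.inr ℝ ℝ (Esp n)‖ ≤ 1 := by
      refine ContinuousLinearMap.opNorm_le_bound _ zero_le_one ?_
      intro x
      simp [Prod.norm_def]
    calc ‖(fderiv ℝ G (t, p)).comp (ContinuousLinearMap.inr ℝ ℝ (Esp n))‖
        ≤ ‖fderiv ℝ G (t, p)‖ * ‖ContinuousLinearMap.inr ℝ ℝ (Esp n)‖ :=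
          ContinuousLinearMap.opNorm_comp_le _ _
      _ ≤ ‖fderiv ℝ G (t, p)‖ * 1 :=
          mul_le_mul_of_nonneg_left hinr (norm_nonneg _)
      _ = ‖fderiv ℝ G (t, p)‖ := mul_one _
      _ ≤ max b 0 := by
          by_cases hp : p ∈ C
          · exact le_max_of_le_left (hb _ (mem_prod.mpr ⟨ht, hp⟩))
          · rw [hDGz (t, p) hp]; simp
  have hlip : LipschitzWith (Real.toNNReal (max b 0)) (fun x : Esp n => G (t, x)) := by
    refine lipschitzWith_of_nnnorm_fderiv_le (𝕜 := ℝ)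
      (fun p => (hslice p).differentiableAt) (fun p => ?_)
    rw [← norm_toNNReal]
    exact Real.toNNReal_mono (hbound p)
  have : hamVF (K t) = fun x : Esp n => G (t, x) := funext fun p => hGeq t p
  rw [this]
  exact hlip

lemma hamVF_scale {H : Esp n → ℝ} (hH : Differentiable ℝ H) {c : ℝ} (hc : c ≠ 0) (q : Esp n) :
    hamVF (fun x => c⁻¹ ^ 2 * H (c • x)) q = c⁻¹ • hamVF H (c • q) := by
  have hs : HasFDerivAt (fun x : Esp n => c • x)
      (c • ContinuousLinearMap.id ℝ (Esp n)) q := (hasFDerivAt_id q).const_smul c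
  have hcomp : HasFDerivAt (fun x : Esp n => H (c • x))
      ((fderiv ℝ H (c • q)).comp (c • ContinuousLinearMap.id ℝ (Esp n))) q :=
    (hH (c • q)).hasFDerivAt.comp q hs
  have hmul : HasFDerivAt (fun x : Esp n => c⁻¹ ^ 2 * H (c • x))
      ((c⁻¹ ^ 2) • ((fderiv ℝ H (c • q)).comp (c • ContinuousLinearMap.id ℝ (Esp n)))) q :=
    hcomp.const_mul _
  have hfd := hmul.fderiv
  unfold hamVF
  rw [hfd]
  set A := fderiv ℝ H (c • q)
  have key : ∀ v : Esp n,
      ((c⁻¹ ^ 2) • (A.comp (c • ContinuousLinearMap.id ℝ (Esp n)))) v = c⁻¹ * A v := by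
    intro v
    simp [ContinuousLinearMap.smul_apply, ContinuousLinearMap.comp_apply, map_smul]
    field_simp
  refine Prod.ext ?_ ?_
  · funext i
    simp only [key, Prod.smul_fst, Pi.smul_apply, smul_eq_mul]
    ring
  · funext i
    simp only [key, Prod.smul_snd, Pi.smul_apply, smul_eq_mul]

open Pointwise in
lemma totVar_scale (f : Esp n → ℝ) {a d : ℝ} (ha : 0 ≤ a) (hd : d ≠ 0) :
    totVar (fun x : Esp n => a * f (d • x)) = a * totVar f := by
  have hsur : Function.Surjective (fun x : Esp n => d • x) :=
    fun y => ⟨d⁻¹ • y, smul_inv_smul₀ hd y⟩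
  have h1 : Set.range (fun x : Esp n => a * f (d • x)) = a • Set.range f := by
    have h2 : (fun x : Esp n => a * f (d • x))
        = (fun y : ℝ => a • y) ∘ (f ∘ fun x : Esp n => d • x) := rfl
    rw [h2, Set.range_comp, Function.Surjective.range_comp hsur, Set.image_smul]
  rw [totVar, totVar, h1, Real.sSup_smul_of_nonneg ha, Real.sInf_smul_of_nonneg ha,
    smul_eq_mul, smul_eq_mul]
  ring

end S8

/-- `Ham^c(ℝ^{2n})` has no short loops: every loop of compactly
supported Hamiltonian diffeomorphisms can be deformed, through loops, to one of
arbitrarily small Hofer length. -/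
theorem statement8 {n : ℕ} (K : ℝ → Esp n → ℝ)
    (hKsm : ContDiff ℝ (⊤ : ℕ∞) fun q : ℝ × Esp n => K q.1 q.2)
    (hKsupp : IsCompactlySupported K)
    (ψ : ℝ → Esp n → Esp n) (hψ : IsHamIsotopyOf K ψ)
    (hloop : ∀ x, ψ 1 x = x) :
    ∀ ε > (0:ℝ), ∃ Kfam : ℝ → ℝ → Esp n → ℝ,
      (ContDiff ℝ (⊤ : ℕ∞) fun q : ℝ × ℝ × Esp n => Kfam q.1 q.2.1 q.2.2) ∧
      (∃ C : Set (Esp n), IsCompact C ∧ ∀ s t x, x ∉ C → Kfam s t x = 0) ∧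
      (∀ t x, Kfam 0 t x = K t x) ∧
      (∀ s ∈ Icc (0:ℝ) 1, ∀ ψ' : ℝ → Esp n → Esp n,
        IsHamIsotopyOf (Kfam s) ψ' → ∀ x, ψ' 1 x = x) ∧
      hoferLength (Kfam 1) < ε := by
  intro ε hε
  obtain ⟨C, hCcomp, hCsupp⟩ := hKsupp
  obtain ⟨r, hr⟩ := hCcomp.isBounded.subset_closedBall 0
  obtain ⟨M, hM⟩ := S8.exists_unif_lipschitz hKsm hCcomp hCsupp
  have hsq : 0 ≤ Real.sqrt ((|hoferLength K| + 1) / ε) := Real.sqrt_nonneg _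
  set L : ℝ := hoferLength K with hLdef
  set R : ℝ := 1 + Real.sqrt ((|L| + 1) / ε) with hRdef
  have hR1 : 1 ≤ R := by rw [hRdef]; linarith
  have hlam1 : ∀ s : ℝ, 1 ≤ 1 + (R - 1) * s ^ 2 := by
    intro s; nlinarith [sq_nonneg s]
  have hlampos : ∀ s : ℝ, 0 < 1 + (R - 1) * s ^ 2 :=
    fun s => lt_of_lt_of_le zero_lt_one (hlam1 s)
  have hlamne : ∀ s : ℝ, 1 + (R - 1) * s ^ 2 ≠ 0 := fun s => (hlampos s).ne'
  have hlamsm : ContDiff ℝ (⊤ : ℕ∞) fun s : ℝ => 1 + (R - 1) * s ^ 2 :=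
    contDiff_const.add (contDiff_const.mul (contDiff_id.pow 2))
  have hKdiff : ∀ t, Differentiable ℝ (K t) := fun t =>
    (hKsm.comp ((contDiff_const (c := t)).prodMk contDiff_id)).differentiable (by simp)
  refine ⟨fun s t x => (1 + (R - 1) * s ^ 2)⁻¹ ^ 2 * K t ((1 + (R - 1) * s ^ 2) • x),
    ?_, ?_, ?_, ?_, ?_⟩
  · -- joint smoothness
    have h1 : ContDiff ℝ (⊤ : ℕ∞) fun q : ℝ × ℝ × Esp n => (1 + (R - 1) * q.1 ^ 2)⁻¹ ^ 2 :=
      ((hlamsm.comp contDiff_fst).inv fun q => hlamne q.1).pow 2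
    have hin : ContDiff ℝ (⊤ : ℕ∞) fun q : ℝ × ℝ × Esp n =>
        ((q.2.1, (1 + (R - 1) * q.1 ^ 2) • q.2.2) : ℝ × Esp n) :=
      (contDiff_fst.comp contDiff_snd).prodMk
        ((hlamsm.comp contDiff_fst).smul (contDiff_snd.comp contDiff_snd))
    exact h1.mul (hKsm.comp hin)
  · -- compact support
    refine ⟨Metric.closedBall 0 r, isCompact_closedBall 0 r, ?_⟩
    intro s t x hx
    have hxn : ¬ ‖x‖ ≤ r := by
      simpa [Metric.mem_closedBall, dist_zero_right] using hx
    have hout : (1 + (R - 1) * s ^ 2) • x ∉ C := by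
      intro hmem
      have h1 : ‖(1 + (R - 1) * s ^ 2) • x‖ ≤ r := by
        simpa [dist_zero_right] using hr hmem
      have h2 : ‖x‖ ≤ ‖(1 + (R - 1) * s ^ 2) • x‖ := by
        rw [norm_smul, Real.norm_eq_abs, abs_of_pos (hlampos s)]
        nlinarith [norm_nonneg x, hlam1 s]
      exact hxn (h2.trans h1)
    simp only [hCsupp t _ hout, mul_zero]
  · -- equals K at s = 0
    intro t x
    norm_num
  · -- loop property
    intro s _ ψ' hψ' x
    have hc : (1 + (R - 1) * s ^ 2 : ℝ) ≠ 0 := hlamne s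
    set c : ℝ := 1 + (R - 1) * s ^ 2 with hcdef
    have hτmem : ∀ t : ℝ, max 0 (min t 1) ∈ Icc (0:ℝ) 1 :=
      fun t => ⟨le_max_left _ _, max_le zero_le_one (min_le_right _ _)⟩
    have hτeq : ∀ t ∈ Ico (0:ℝ) 1, max 0 (min t 1) = t := by
      intro t ht
      rw [min_eq_left ht.2.le, max_eq_right ht.1]
    set v : ℝ → Esp n → Esp n :=
      fun t p => c⁻¹ • hamVF (K (max 0 (min t 1))) (c • p) with hvdef
    have hvlip : ∀ t, LipschitzWith (‖c⁻¹‖₊ * (M * ‖c‖₊)) (v t) := fun t =>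
      (lipschitzWith_smul c⁻¹).comp ((hM _ (hτmem t)).comp (lipschitzWith_smul c))
    have hfc : ContinuousOn (fun u => ψ' u x) (Icc (0:ℝ) 1) :=
      fun t _ => ((hψ'.2 x t).continuousAt).continuousWithinAt
    have hgc : ContinuousOn (fun u => c⁻¹ • ψ u (c • x)) (Icc (0:ℝ) 1) :=
      fun t _ => (((hψ.2 (c • x) t).continuousAt).const_smul c⁻¹).continuousWithinAt
    have hf' : ∀ t ∈ Ico (0:ℝ) 1,
        HasDerivWithinAt (fun u => ψ' u x) (v t (ψ' t x)) (Ici t) t := by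
      intro t ht
      have hd : HasDerivAt (fun u => ψ' u x)
          (hamVF (fun y => c⁻¹ ^ 2 * K t (c • y)) (ψ' t x)) t := hψ'.2 x t
      have heq : hamVF (fun y => c⁻¹ ^ 2 * K t (c • y)) (ψ' t x) = v t (ψ' t x) := by
        rw [S8.hamVF_scale (hKdiff t) hc, hvdef]
        simp only [hτeq t ht]
      rw [heq] at hd
      exact hd.hasDerivWithinAt
    have hg' : ∀ t ∈ Ico (0:ℝ) 1,
        HasDerivWithinAt (fun u => c⁻¹ • ψ u (c • x))
          (v t (c⁻¹ • ψ t (c • x))) (Ici t) t := by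
      intro t ht
      have hd : HasDerivAt (fun u => c⁻¹ • ψ u (c • x))
          (c⁻¹ • hamVF (K t) (ψ t (c • x))) t := (hψ.2 (c • x) t).const_smul c⁻¹
      have heq : v t (c⁻¹ • ψ t (c • x)) = c⁻¹ • hamVF (K t) (ψ t (c • x)) := by
        rw [hvdef]
        simp only [hτeq t ht, smul_inv_smul₀ hc]
      rw [← heq] at hd
      exact hd.hasDerivWithinAt
    have hinit : (fun u => ψ' u x) 0 = (fun u => c⁻¹ • ψ u (c • x)) 0 := by
      simp only [hψ'.1 x, hψ.1 (c • x), inv_smul_smul₀ hc]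
    have huniq := ODE_solution_unique hvlip hfc hf' hgc hg' hinit
    have h1 := huniq (right_mem_Icc.mpr zero_le_one)
    simp only [hloop (c • x), inv_smul_smul₀ hc] at h1
    exact h1
  · -- short Hofer length
    have hlamE : (1 + (R - 1) * (1:ℝ) ^ 2) = R := by ring
    have ha : (0:ℝ) ≤ (1 + (R - 1) * (1:ℝ) ^ 2)⁻¹ ^ 2 := by positivity
    have hlen : hoferLength
        (fun t x => (1 + (R - 1) * (1:ℝ) ^ 2)⁻¹ ^ 2 * K t ((1 + (R - 1) * (1:ℝ) ^ 2) • x))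
        = (1 + (R - 1) * (1:ℝ) ^ 2)⁻¹ ^ 2 * L := by
      rw [hoferLength]
      have : ∀ t : ℝ, totVar
          (fun x : Esp n => (1 + (R - 1) * (1:ℝ) ^ 2)⁻¹ ^ 2 * K t ((1 + (R - 1) * (1:ℝ) ^ 2) • x))
          = (1 + (R - 1) * (1:ℝ) ^ 2)⁻¹ ^ 2 * totVar (K t) :=
        fun t => S8.totVar_scale (K t) ha (hlamne 1)
      simp_rw [this]
      rw [intervalIntegral.integral_const_mul]
      rfl
    rw [hlen, hlamE]
    have hu : 0 ≤ (|L| + 1) / ε := by positivity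
    have hRgt : Real.sqrt ((|L| + 1) / ε) < R := by rw [hRdef]; linarith
    have hR2 : (|L| + 1) / ε < R ^ 2 := by
      nlinarith [Real.sq_sqrt hu, Real.sqrt_nonneg ((|L| + 1) / ε)]
    have hεR : |L| + 1 < R ^ 2 * ε := (div_lt_iff₀ hε).mp hR2
    have hR2pos : (0:ℝ) < R ^ 2 := by positivity
    rw [inv_pow, inv_mul_lt_iff₀ hR2pos]
    nlinarith [le_abs_self L]
end
end

section
/- Let n ≥ 1 and let e¹,…,e^{2n+2} denote the standard dual basis of (ℝ^{2n+2})*. In the exterior algebra of (ℝ^{2n+2})*, set ω = Σ_{i=1}^n e^{2i−1}∧e^{2i} and σ = e^{2n+1}∧e^{2n+2}, and let α and β lie in the span of e¹,…,e^{2n}. Let ρ > 0 and suppose that the (n+1)-st power in the exterior algebra satisfies (ω + ρσ + e^{2n+1}∧α + e^{2n+2}∧β)^{n+1} = c·e¹∧e²∧⋯∧e^{2n+2} with c > 0. Then for every t ∈ [0,1] there is c_t > 0 with (ω + (1−t+tρ)σ + t·e^{2n+1}∧α + t·e^{2n+2}∧β)^{n+1} = c_t·e¹∧e²∧⋯∧e^{2n+2};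 in particular each of these 2-forms has non-vanishing top power, so the linear interpolation consists of non-degenerate 2-forms. -/
open Set

noncomputable section

abbrev DualV (n : ℕ) : Type := Module.Dual ℝ (Fin (2*n+2) → ℝ)

def eDual (n : ℕ) : Fin (2*n+2) → DualV n :=
  fun i => (Pi.basisFun ℝ (Fin (2*n+2))).dualBasis i

def ee (n : ℕ) (i : Fin (2*n+2)) : ExteriorAlgebra ℝ (DualV n) :=
  ExteriorAlgebra.ι ℝ (eDual n i)

def omegaExt (n : ℕ) : ExteriorAlgebra ℝ (DualV n) :=
  ∑ i : Fin n, ee n ⟨2*(i:ℕ), by have := i.isLt; omega⟩ *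
    ee n ⟨2*(i:ℕ)+1, by have := i.isLt; omega⟩

def sigmaExt (n : ℕ) : ExteriorAlgebra ℝ (DualV n) :=
  ee n ⟨2*n, by omega⟩ * ee n ⟨2*n+1, by omega⟩

def topExt (n : ℕ) : ExteriorAlgebra ℝ (DualV n) :=
  (List.ofFn fun i : Fin (2*n+2) => ee n i).prod

def spanFirst (n : ℕ) : Submodule ℝ (DualV n) :=
  Submodule.span ℝ (Set.range fun i : Fin (2*n) => eDual n ⟨(i:ℕ), by have := i.isLt; omega⟩)

/-! ### Auxiliary abstract ring lemmas -/

section ringlemmas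
variable {A : Type*} [Ring A]

lemma sum_pow_zero_of_sq (b : ℕ → A) (hc : ∀ i j, Commute (b i) (b j))
    (h2 : ∀ i, b i * b i = 0) :
    ∀ m k, m < k → (∑ i ∈ Finset.range m, b i) ^ k = 0 := by
  intro m
  induction m with
  | zero => intro k hk; simp [zero_pow (by omega : k ≠ 0)]
  | succ m ih =>
    intro k hk
    rw [Finset.sum_range_succ]
    have hcomm : Commute (∑ i ∈ Finset.range m, b i) (b m) :=
      Commute.sum_left _ _ _ (fun i _ => hc i m)
    rw [hcomm.add_pow]
    apply Finset.sum_eq_zero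
    intro j hj
    simp only [Finset.mem_range] at hj
    rcases Nat.lt_or_ge j (k - 1) with hj2 | hj2
    · have : (b m) ^ (k - j) = (b m * b m) * (b m) ^ (k - j - 2) := by
        rw [← pow_two, ← pow_add]; congr 1; omega
      rw [this, h2, zero_mul, mul_zero, zero_mul]
    · have : j > m := by omega
      rw [ih j this, zero_mul, zero_mul]

lemma sum_pow_eq_fact (b : ℕ → A) (hc : ∀ i j, Commute (b i) (b j))
    (h2 : ∀ i, b i * b i = 0) :
    ∀ m, (∑ i ∈ Finset.range m, b i) ^ m
      = m.factorial • ((List.range m).map b).prod := by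
  intro m
  induction m with
  | zero => simp
  | succ m ih =>
    rw [Finset.sum_range_succ]
    have hcomm : Commute (∑ i ∈ Finset.range m, b i) (b m) :=
      Commute.sum_left _ _ _ (fun i _ => hc i m)
    rw [hcomm.add_pow]
    rw [Finset.sum_range_succ, Finset.sum_range_succ]
    have h0 : ∑ j ∈ Finset.range m,
        (∑ i ∈ Finset.range m, b i) ^ j * b m ^ (m + 1 - j) * ((m+1).choose j : A) = 0 := by
      apply Finset.sum_eq_zero
      intro j hj
      simp only [Finset.mem_range] at hj
      have : (b m) ^ (m + 1 - j) = (b m * b m) * (b m) ^ (m + 1 - j - 2) := by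
        rw [← pow_two, ← pow_add]; congr 1; omega
      rw [this, h2, zero_mul, mul_zero, zero_mul]
    rw [h0, zero_add]
    rw [sum_pow_zero_of_sq b hc h2 m (m+1) (by omega)]
    rw [List.range_succ, List.map_append, List.prod_append]
    simp only [Nat.sub_self, pow_zero, List.map_cons, List.map_nil, List.prod_cons,
      List.prod_nil, mul_one, zero_mul, mul_zero, add_zero]
    rw [ih]
    have : m + 1 - m = 1 := by omega
    rw [this, pow_one, Nat.choose_succ_self_right]
    rw [smul_mul_assoc, smul_mul_assoc]
    rw [Nat.factorial_succ]
    rw [mul_nsmul]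
    congr 1
    rw [nsmul_eq_mul, Nat.cast_comm]
end ringlemmas

/-! ### Exterior algebra anticommutation lemmas -/

section extlemmas
variable {R : Type*} {M : Type*} [CommRing R] [AddCommGroup M] [Module R M]
open ExteriorAlgebra

lemma iota_swap (x y : M) : ι R x * ι R y = -(ι R y * ι R x) :=
  eq_neg_of_add_eq_zero_left (ι_add_mul_swap x y)

lemma pair_mul_iota (a b c : M) :
    (ι R a * ι R b) * ι R c = ι R c * (ι R a * ι R b) := by
  rw [mul_assoc, iota_swap b c, mul_neg, ← mul_assoc, iota_swap a c,
    neg_mul, neg_neg, mul_assoc]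

lemma commute_pair_pair (a b c d : M) :
    Commute (ι R a * ι R b) (ι R c * ι R d) :=
  Commute.mul_right (pair_mul_iota a b c) (pair_mul_iota a b d)

lemma pair_mul_pair_left (a u v : M) : (ι R a * ι R u) * (ι R a * ι R v) = 0 := by
  rw [mul_assoc, ← mul_assoc (ι R u), iota_swap u a, neg_mul, mul_neg,
    ← mul_assoc, ← mul_assoc, ι_sq_zero, zero_mul, zero_mul, neg_zero]

lemma pair_mul_pair_mid (u a v : M) : (ι R u * ι R a) * (ι R a * ι R v) = 0 := by
  rw [mul_assoc, ← mul_assoc (ι R a), ι_sq_zero, zero_mul, mul_zero]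

lemma pair_mul_pair_ends (a u v : M) : (ι R a * ι R u) * (ι R v * ι R a) = 0 := by
  rw [iota_swap v a, mul_neg, pair_mul_pair_left, neg_zero]

lemma prod_ofFn_eq_range {A : Type*} [Monoid A] {k : ℕ} (f : Fin k → A) (u : ℕ → A)
    (hf : ∀ i : Fin k, f i = u i) :
    (List.ofFn f).prod = ((List.range k).map u).prod := by
  rw [List.ofFn_eq_map, ← List.map_coe_finRange_eq_range, List.map_map]
  congr 1
  exact List.map_congr_left (fun i _ => hf i)

end extlemmas

/-! ### Setup specific to the statement -/

namespace S17
open ExteriorAlgebra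
set_option synthInstance.maxHeartbeats 1000000
set_option maxHeartbeats 1000000

variable (n : ℕ)

def vv (j : ℕ) : DualV n := if h : j < 2*n+2 then eDual n ⟨j, h⟩ else 0

def xx (j : ℕ) : ExteriorAlgebra ℝ (DualV n) := ι ℝ (vv n j)

def bb (i : ℕ) : ExteriorAlgebra ℝ (DualV n) := xx n (2*i) * xx n (2*i+1)

def FF (k : ℕ) : ExteriorAlgebra ℝ (DualV n) := ((List.range k).map (xx n)).prod

lemma FF_succ (k : ℕ) : FF n (k+1) = FF n k * xx n k := by
  unfold FF
  rw [List.range_succ, List.map_append, List.prod_append]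
  simp

lemma ee_eq (i : Fin (2*n+2)) : ee n i = xx n (i : ℕ) := by
  unfold ee xx vv
  rw [dif_pos i.isLt]

lemma vv_eq (j : ℕ) (h : j < 2*n+2) : vv n j = eDual n ⟨j, h⟩ := dif_pos h

lemma top_eq : topExt n = FF n (2*n+2) := by
  unfold topExt FF
  exact prod_ofFn_eq_range _ _ (fun i => ee_eq n i)

lemma sigma_eq : sigmaExt n = xx n (2*n) * xx n (2*n+1) := by
  unfold sigmaExt
  rw [ee_eq, ee_eq]

lemma omega_eq : omegaExt n = ∑ i ∈ Finset.range n, bb n i := by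
  unfold omegaExt
  rw [← Fin.sum_univ_eq_sum_range (fun i => bb n i) n]
  apply Finset.sum_congr rfl
  intro i _
  rw [ee_eq, ee_eq]
  rfl

lemma bb_commute (i j : ℕ) : Commute (bb n i) (bb n j) := commute_pair_pair _ _ _ _

lemma bb_sq (i : ℕ) : bb n i * bb n i = 0 := pair_mul_pair_left _ _ _

lemma bb_prod_eq (m : ℕ) : ((List.range m).map (bb n)).prod = FF n (2*m) := by
  induction m with
  | zero => simp [FF]
  | succ m ih =>
    rw [List.range_succ, List.map_append, List.prod_append]
    have h2 : 2 * (m+1) = (2*m+1)+1 := by ring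
    rw [h2, FF_succ, FF_succ, ih]
    simp [bb, mul_assoc]

lemma omega_pow : (omegaExt n) ^ n = n.factorial • FF n (2*n) := by
  rw [omega_eq, sum_pow_eq_fact (bb n) (bb_commute n) (bb_sq n), bb_prod_eq]

lemma omega_pow_zero {k : ℕ} (hk : n < k) : (omegaExt n) ^ k = 0 := by
  rw [omega_eq]
  exact sum_pow_zero_of_sq (bb n) (bb_commute n) (bb_sq n) n k hk

/-- product of the first `2n` covectors times a repeated covector vanishes -/
lemma FF_mul_xx (j : ℕ) (hj : j < 2*n) : FF n (2*n) * xx n j = 0 := by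
  have key : FF n (2*n) * xx n j
      = ιMulti ℝ (2*n+1) (fun i : Fin (2*n+1) => if (i:ℕ) < 2*n then vv n i else vv n j) := by
    rw [ιMulti_apply]
    rw [prod_ofFn_eq_range _ (fun i => if i < 2*n then xx n i else xx n j)
      (fun i => by split <;> rfl)]
    rw [List.range_succ, List.map_append, List.prod_append]
    simp only [List.map_cons, List.map_nil, List.prod_cons, List.prod_nil, mul_one]
    rw [if_neg (lt_irrefl _)]
    congr 1
    unfold FF
    congr 1
    apply List.map_congr_left
    intro a ha
    rw [List.mem_range] at ha
    rw [if_pos ha]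
  rw [key]
  have hjj : ((⟨j, by omega⟩ : Fin (2*n+1)) : ℕ) = j := rfl
  have heq : (fun i : Fin (2*n+1) => if (i:ℕ) < 2*n then vv n i else vv n j) ⟨j, by omega⟩
      = (fun i : Fin (2*n+1) => if (i:ℕ) < 2*n then vv n i else vv n j) ⟨2*n, by omega⟩ := by
    dsimp only
    rw [if_pos, if_neg (lt_irrefl _)]
    exact hj
  exact AlternatingMap.map_eq_zero_of_eq _ _ heq (Fin.ne_of_val_ne (by simp; omega))

lemma FF_mul_iota {α : DualV n} (hα : α ∈ spanFirst n) : FF n (2*n) * ι ℝ α = 0 := by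
  unfold spanFirst at hα
  induction hα using Submodule.span_induction with
  | mem x hx =>
    obtain ⟨i, rfl⟩ := hx
    have h1 := FF_mul_xx n i (by have := i.isLt; omega)
    rw [xx, vv_eq n i (by have := i.isLt; omega)] at h1
    simpa using h1
  | zero => simp
  | add x y hx hy ihx ihy => rw [map_add, mul_add, ihx, ihy, add_zero]
  | smul a x hx ihx => rw [map_smul, mul_smul_comm, ihx, smul_zero]

end S17

namespace S17
open ExteriorAlgebra
set_option synthInstance.maxHeartbeats 1000000
set_option maxHeartbeats 2000000

lemma xx_def (n j : ℕ) : xx n j = ι ℝ (vv n j) := rfl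

lemma master (m : ℕ) (α β : DualV (m+1)) (hα : α ∈ spanFirst (m+1)) (hβ : β ∈ spanFirst (m+1)) :
    ∃ Q : ExteriorAlgebra ℝ (DualV (m+1)), ∀ s t : ℝ,
      (omegaExt (m+1) + s • sigmaExt (m+1)
        + t • (ee (m+1) ⟨2*(m+1), by omega⟩ * ι ℝ α)
        + t • (ee (m+1) ⟨2*(m+1)+1, by omega⟩ * ι ℝ β)) ^ ((m+1)+1)
      = ((((m+1)+1).factorial : ℝ) * s) • topExt (m+1) + (t^2) • Q := by
  set ω := omegaExt (m+1) with hω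
  set Y := xx (m+1) (2*(m+1)) * ι ℝ α with hY
  set Z := xx (m+1) (2*(m+1)+1) * ι ℝ β with hZ
  set σ := xx (m+1) (2*(m+1)) * xx (m+1) (2*(m+1)+1) with hσ
  -- basic multiplication facts
  have hσσ : σ * σ = 0 := pair_mul_pair_left _ _ _
  have hYY : Y * Y = 0 := pair_mul_pair_left _ _ _
  have hZZ : Z * Z = 0 := pair_mul_pair_left _ _ _
  have hσY : σ * Y = 0 := pair_mul_pair_left _ _ _
  have hYσ : Y * σ = 0 := pair_mul_pair_left _ _ _
  have hσZ : σ * Z = 0 := pair_mul_pair_mid _ _ _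
  have hZσ : Z * σ = 0 := pair_mul_pair_ends _ _ _
  have hZY : Z * Y = Y * Z :=
    (commute_pair_pair (vv (m+1) (2*(m+1))) α (vv (m+1) (2*(m+1)+1)) β).eq.symm
  have hωσ : Commute ω σ := by
    rw [hω, omega_eq]
    exact Commute.sum_left _ _ _ (fun i _ => commute_pair_pair _ _ _ _)
  have hωY : Commute ω Y := by
    rw [hω, omega_eq]
    exact Commute.sum_left _ _ _ (fun i _ => commute_pair_pair _ _ _ _)
  have hωZ : Commute ω Z := by
    rw [hω, omega_eq]
    exact Commute.sum_left _ _ _ (fun i _ => commute_pair_pair _ _ _ _)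
  -- the big-power facts
  have hY0 : ω ^ (m+1) * Y = 0 := by
    rw [hω, omega_pow, smul_mul_assoc, hY, xx_def, iota_swap, mul_neg, ← mul_assoc,
      FF_mul_iota (m+1) hα, zero_mul, neg_zero, smul_zero]
  have hZ0 : ω ^ (m+1) * Z = 0 := by
    rw [hω, omega_pow, smul_mul_assoc, hZ, xx_def, iota_swap, mul_neg, ← mul_assoc,
      FF_mul_iota (m+1) hβ, zero_mul, neg_zero, smul_zero]
  have hσtop : ω ^ (m+1) * σ = (m+1).factorial • topExt (m+1) := by
    rw [hω, omega_pow, smul_mul_assoc, hσ, ← mul_assoc, ← FF_succ, ← FF_succ, top_eq]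
  refine ⟨(2:ℝ) • (ω^m * (Y*Z) * ((m+1+1).choose m : ExteriorAlgebra ℝ (DualV (m+1)))), ?_⟩
  intro s t
  set N := s • σ + t • Y + t • Z with hN
  have hσe : sigmaExt (m+1) = σ := by rw [hσ, sigma_eq]
  have hee1 : ee (m+1) ⟨2*(m+1), by omega⟩ * ι ℝ α = Y := by rw [hY, ee_eq]
  have hee2 : ee (m+1) ⟨2*(m+1)+1, by omega⟩ * ι ℝ β = Z := by rw [hZ, ee_eq]
  rw [hσe, hee1, hee2]
  have hsplit : ω + s • σ + t • Y + t • Z = ω + N := by rw [hN]; abel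
  rw [hsplit]
  have hωN : Commute ω N :=
    ((hωσ.smul_right s).add_right (hωY.smul_right t)).add_right (hωZ.smul_right t)
  have hN2 : N * N = (2*t^2) • (Y * Z) := by
    rw [hN]
    simp only [mul_add, add_mul, smul_mul_assoc, mul_smul_comm, hσσ, hσY, hYσ, hσZ, hZσ,
      hYY, hZZ, hZY, smul_zero, zero_add, add_zero]
    module
  have hN3 : N ^ 3 = 0 := by
    have hWN : (Y * Z) * N = 0 := by
      have hWσ : (Y*Z) * σ = 0 := by rw [mul_assoc, hZσ, mul_zero]
      have hWY : (Y*Z) * Y = 0 := by rw [mul_assoc, hZY, ← mul_assoc, hYY, zero_mul]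
      have hWZ : (Y*Z) * Z = 0 := by rw [mul_assoc, hZZ, mul_zero]
      rw [hN]
      simp only [mul_add, mul_smul_comm, hWσ, hWY, hWZ, smul_zero, add_zero]
    have h3 : N ^ 3 = (N * N) * N := by rw [pow_succ, pow_two]
    rw [h3, hN2, smul_mul_assoc, hWN, smul_zero]
  have hNk : ∀ k, N ^ (3 + k) = 0 := by
    intro k
    rw [pow_add, hN3, zero_mul]
  rw [hωN.add_pow]
  rw [Finset.sum_range_succ, Finset.sum_range_succ, Finset.sum_range_succ]
  have hlow : ∑ k ∈ Finset.range m, ω ^ k * N ^ (m + 1 + 1 - k) *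
      ((m+1+1).choose k : ExteriorAlgebra ℝ (DualV (m+1))) = 0 := by
    apply Finset.sum_eq_zero
    intro k hk
    simp only [Finset.mem_range] at hk
    have he : m + 1 + 1 - k = 3 + (m - k - 1) := by omega
    rw [he, hNk, mul_zero, zero_mul]
  rw [hlow, zero_add]
  -- the three remaining terms
  have hterm2 : ω ^ m * N ^ (m + 1 + 1 - m) * ((m+1+1).choose m : ExteriorAlgebra ℝ (DualV (m+1)))
      = t^2 • ((2:ℝ) • (ω^m * (Y*Z) * ((m+1+1).choose m : ExteriorAlgebra ℝ (DualV (m+1))))) := by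
    have he : m + 1 + 1 - m = 2 := by omega
    rw [he, pow_two, hN2, mul_smul_comm, smul_mul_assoc, smul_smul]
    congr 1
    ring
  have hterm1 : ω ^ (m+1) * N ^ (m + 1 + 1 - (m+1)) *
      ((m+1+1).choose (m+1) : ExteriorAlgebra ℝ (DualV (m+1)))
      = (((m+1+1).factorial : ℝ) * s) • topExt (m+1) := by
    have he : m + 1 + 1 - (m+1) = 1 := by omega
    rw [he, pow_one]
    show ω ^ (m+1) * (s • σ + t • Y + t • Z) *
      ((m+1+1).choose (m+1) : ExteriorAlgebra ℝ (DualV (m+1))) = _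
    simp only [mul_add, mul_smul_comm, hY0, hZ0, hσtop, smul_zero, add_zero]
    rw [smul_mul_assoc, smul_mul_assoc, ← (Nat.cast_commute ((m+1+1).choose (m+1))
        (topExt (m+1))).eq, ← nsmul_eq_mul, ← Nat.cast_smul_eq_nsmul ℝ,
      ← Nat.cast_smul_eq_nsmul ℝ, smul_smul, smul_smul]
    congr 1
    rw [Nat.choose_succ_self_right]
    rw [show (m+1+1).factorial = (m+2) * (m+1).factorial from Nat.factorial_succ (m+1)]
    push_cast
    ring
  have hterm0 : ω ^ (m+1+1) * N ^ (m + 1 + 1 - (m+1+1)) *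
      ((m+1+1).choose (m+1+1) : ExteriorAlgebra ℝ (DualV (m+1))) = 0 := by
    rw [show ω ^ (m+1+1) = 0 from omega_pow_zero (m+1) (by omega), zero_mul, zero_mul]
  rw [hterm2, hterm1, hterm0, add_zero]
  exact add_comm _ _

end S17

set_option synthInstance.maxHeartbeats 1000000 in
set_option maxHeartbeats 2000000 in
/-- (The pointwise linear-algebra content of Lemma 2.4 of the paper.)
If `α, β` lie in the span of `e¹, …, e^{2n}`, `ρ > 0`, and the `(n+1)`-st exterior power
of `ω + ρσ + e^{2n+1}∧α + e^{2n+2}∧β` is a positive multiple of the top form, then for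
every `t ∈ [0,1]` the form `ω + (1-t+tρ)σ + t e^{2n+1}∧α + t e^{2n+2}∧β` also has
`(n+1)`-st power a positive multiple of the top form; in particular the linear
interpolation consists of non-degenerate 2-forms. -/
theorem statement17 (n : ℕ) (hn : 1 ≤ n) (ρ : ℝ) (hρ : 0 < ρ)
    (α β : DualV n) (hα : α ∈ spanFirst n) (hβ : β ∈ spanFirst n)
    (c : ℝ) (hc : 0 < c)
    (h : (omegaExt n + ρ • sigmaExt n +
        ee n ⟨2*n, by omega⟩ * ExteriorAlgebra.ι ℝ α +
        ee n ⟨2*n+1, by omega⟩ * ExteriorAlgebra.ι ℝ β) ^ (n+1) = c • topExt n) :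
    ∀ t ∈ Icc (0:ℝ) 1, ∃ ct : ℝ, 0 < ct ∧
      (omegaExt n + (1 - t + t*ρ) • sigmaExt n +
        t • (ee n ⟨2*n, by omega⟩ * ExteriorAlgebra.ι ℝ α) +
        t • (ee n ⟨2*n+1, by omega⟩ * ExteriorAlgebra.ι ℝ β)) ^ (n+1) = ct • topExt n := by
  obtain ⟨m, rfl⟩ : ∃ m, n = m + 1 := ⟨n - 1, by omega⟩
  obtain ⟨Q, hQ⟩ := S17.master m α β hα hβ
  set K : ℝ := (((m+1)+1).factorial : ℝ) with hK
  have hKpos : 0 < K := by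
    rw [hK]
    exact_mod_cast Nat.factorial_pos _
  have h1 := hQ ρ 1
  rw [one_smul, one_smul, one_pow, one_smul] at h1
  have hQeq : Q = (c - K * ρ) • topExt (m+1) := by
    have h2 : (K * ρ) • topExt (m+1) + Q = c • topExt (m+1) := by
      rw [← h1, ← h]
    have h3 : Q = c • topExt (m+1) - (K * ρ) • topExt (m+1) := by
      rw [← h2]; abel
    rw [h3, ← sub_smul]
  intro t ht
  obtain ⟨ht0, ht1⟩ := ht
  refine ⟨K * (1 - t + t*ρ) + t^2 * (c - K*ρ), ?_, ?_⟩
  · have hE : K * (1 - t + t*ρ) + t^2 * (c - K*ρ)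
        = K * (1-t) * (1+t*ρ) + t^2 * c := by ring
    rw [hE]
    rcases eq_or_lt_of_le ht1 with rfl | hlt
    · nlinarith
    · nlinarith [mul_pos hKpos (mul_pos (by linarith : (0:ℝ) < 1 - t)
        (by nlinarith : (0:ℝ) < 1 + t*ρ))]
  · rw [hQ (1 - t + t*ρ) t, hQeq, smul_smul, ← add_smul]
end
end
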